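/- Let G be a tree, let H be a nonempty set of vertices of G such that the induced subgraph on H is connected, and let s₀ be any vertex of G. Let r₀ ∈ H be a vertex minimizing the function r ↦ dist_G(r, s₀) over H. Then for every r ∈ H one has dist_G(r, s₀) = dist_G(r, r₀) + dist_G(r₀, s₀). -/

import Mathlib

open SimpleGraph Walk

/-- In a tree, distances to a fixed vertex from two adjacent vertices differ by exactly 1. -/
lemma tree_adj_dist {V : Type*} {G : SimpleGraph V} (hG : G.IsTree) {u v s : V}
    (h : G.Adj u v) : G.dist u s = G.dist v s + 1 ∨ G.dist v s = G.dist u s + 1 := by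
  classical
  have hc := hG.isConnected
  have h1 : G.dist u v = 1 := SimpleGraph.dist_eq_one_iff_adj.2 h
  have h1' : G.dist v u = 1 := SimpleGraph.dist_eq_one_iff_adj.2 h.symm
  have t1 : G.dist u s ≤ G.dist u v + G.dist v s := hc.dist_triangle
  have t2 : G.dist v s ≤ G.dist v u + G.dist u s := hc.dist_triangle
  have hne : G.dist u s ≠ G.dist v s := by
    intro heq
    rcases Nat.eq_zero_or_pos (G.dist u s) with h0 | hpos
    · have hu : u = s := hc.dist_eq_zero_iff.1 h0
      have hv : v = s := hc.dist_eq_zero_iff.1 (heq ▸ h0)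
      exact h.ne (hu.trans hv.symm)
    · obtain ⟨P, hP, hPl⟩ := hc.exists_path_of_dist u s
      by_cases hv : v ∈ P.support
      · have hsplit : (P.takeUntil v hv).length + (P.dropUntil v hv).length = P.length := by
          rw [← Walk.length_append, Walk.take_spec]
        have h2 : G.dist u v ≤ (P.takeUntil v hv).length := SimpleGraph.dist_le _
        have h3 : G.dist v s ≤ (P.dropUntil v hv).length := SimpleGraph.dist_le _
        omega
      · have hP' : (Walk.cons h.symm P).IsPath := hP.cons hv
        obtain ⟨Q, hQ, hQl⟩ := hc.exists_path_of_dist v s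
        have heqp : (⟨Walk.cons h.symm P, hP'⟩ : G.Path v s) = ⟨Q, hQ⟩ :=
          hG.IsAcyclic.path_unique _ _
        have hlen := congrArg (fun (R : G.Path v s) => R.1.length) heqp
        simp only [Walk.length_cons] at hlen
        omega
  omega

/-- In a tree, a vertex cannot have two distinct neighbors both strictly closer to `s`. -/
lemma tree_no_two_down {V : Type*} {G : SimpleGraph V} (hG : G.IsTree) {u v w s : V}
    (hv : G.Adj u v) (hw : G.Adj u w) (hvw : v ≠ w)
    (hds : G.dist u s = G.dist v s + 1) (heq : G.dist v s = G.dist w s) : False := by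
  classical
  have hc := hG.isConnected
  obtain ⟨P, hP, hPl⟩ := hc.exists_path_of_dist v s
  obtain ⟨Q, hQ, hQl⟩ := hc.exists_path_of_dist w s
  have huP : u ∉ P.support := by
    intro hu
    have h3 : G.dist u s ≤ (P.dropUntil u hu).length := SimpleGraph.dist_le _
    have hsplit : (P.takeUntil u hu).length + (P.dropUntil u hu).length = P.length := by
      rw [← Walk.length_append, Walk.take_spec]
    omega
  have huQ : u ∉ Q.support := by
    intro hu
    have h3 : G.dist u s ≤ (Q.dropUntil u hu).length := SimpleGraph.dist_le _
    have hsplit : (Q.takeUntil u hu).length + (Q.dropUntil u hu).length = Q.length := by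
      rw [← Walk.length_append, Walk.take_spec]
    omega
  have hP' : (Walk.cons hv P).IsPath := hP.cons huP
  have hQ' : (Walk.cons hw Q).IsPath := hQ.cons huQ
  have heqp : (⟨Walk.cons hv P, hP'⟩ : G.Path u s) = ⟨Walk.cons hw Q, hQ'⟩ :=
    hG.IsAcyclic.path_unique _ _
  have hsup := congrArg (fun (R : G.Path u s) => R.1.support) heqp
  simp only [Walk.support_cons] at hsup
  rw [P.support_eq_cons, Q.support_eq_cons] at hsup
  simp only [List.cons.injEq] at hsup
  exact hvw hsup.2.1

lemma tree_key {V : Type*} {G : SimpleGraph V} (hG : G.IsTree) {H : Set V} {s₀ r₀ : V}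
    (hr₀ : r₀ ∈ H) (hmin : ∀ r ∈ H, G.dist r₀ s₀ ≤ G.dist r s₀) :
    ∀ (n : ℕ) (x : H) (p : (G.induce H).Walk x ⟨r₀, hr₀⟩), p.length = n → p.IsPath →
      G.dist x s₀ = p.length + G.dist r₀ s₀ := by
  intro n
  induction n using Nat.strong_induction_on with
  | _ n ih =>
    intro x p hn hp
    cases p with
    | nil => simp
    | @cons _ y _ h q =>
      have hadj : G.Adj ↑x ↑y := h
      rw [Walk.cons_isPath_iff] at hp
      have hq := hp.1
      have hy : G.dist ↑y s₀ = q.length + G.dist r₀ s₀ := by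
        refine ih q.length ?_ y q rfl hq
        simp only [Walk.length_cons] at hn
        omega
      simp only [Walk.length_cons]
      rcases tree_adj_dist hG (s := s₀) hadj with hcase | hcase
      · omega
      · exfalso
        cases q with
        | nil =>
          have hxH : G.dist r₀ s₀ ≤ G.dist ↑x s₀ := hmin _ x.2
          have hcoe : G.dist (↑(⟨r₀, hr₀⟩ : H)) s₀ = G.dist r₀ s₀ := rfl
          omega
        | @cons _ z _ h2 q2 =>
          have hadj2 : G.Adj ↑y ↑z := h2
          have hq2 : q2.IsPath := hq.of_cons
          have hz : G.dist ↑z s₀ = q2.length + G.dist r₀ s₀ := by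
            refine ih q2.length ?_ z q2 rfl hq2
            simp only [Walk.length_cons] at hn
            omega
          simp only [Walk.length_cons] at hy
          have hxz : (x : V) ≠ ↑z := by
            intro hxy
            apply hp.2
            have hxeq : x = z := Subtype.ext hxy
            rw [hxeq, Walk.support_cons]
            exact List.mem_cons_of_mem _ q2.start_mem_support
          exact tree_no_two_down hG (s := s₀) hadj.symm hadj2 hxz (by omega) (by omega)

theorem tree_dist_additive_of_min {V : Type*} {G : SimpleGraph V}
    (hG : G.IsTree) (H : Set V) (hne : H.Nonempty)
    (hconn : (G.induce H).Connected) (s₀ : V) (r₀ : V) (hr₀ : r₀ ∈ H)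
    (hmin : ∀ r ∈ H, G.dist r₀ s₀ ≤ G.dist r s₀) :
    ∀ r ∈ H, G.dist r s₀ = G.dist r r₀ + G.dist r₀ s₀ := by
  classical
  intro r hr
  obtain ⟨w⟩ := hconn ⟨r, hr⟩ ⟨r₀, hr₀⟩
  have hkey := tree_key hG hr₀ hmin w.bypass.length ⟨r, hr⟩ w.bypass rfl w.bypass_isPath
  have hmap : G.dist r r₀ ≤ w.bypass.length := by
    have := SimpleGraph.dist_le (w.bypass.map (SimpleGraph.Embedding.induce H).toHom)
    exact le_of_le_of_eq this (Walk.length_map ..)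
  have htri : G.dist r s₀ ≤ G.dist r r₀ + G.dist r₀ s₀ := hG.isConnected.dist_triangle
  simp only at hkey
  omega
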